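/- arXiv:1910.08490 — 8 statements merged into one kernel-verified Lean document; each statement's English description precedes it below -/
import Mathlib

section
/- sup_{ε>0} V_ε(f,T) = V(f,T); in particular, V_ε(f,T) → V(f,T) as ε → 0⁺ (with values in [0,∞]). -/
open Filter Set
open scoped ENNReal Topology

/-- The approximate (ε-)variation: infimum of Jordan variations of functions of
bounded variation uniformly ε-close to `f` on `T` (⊤ if no such function). -/
noncomputable def approxVar {M : Type*} [MetricSpace M] (f : ℝ → M) (T : Set ℝ) (ε : ℝ) : ℝ≥0∞ :=
  ⨅ (g : ℝ → M) (_ : eVariationOn g T ≠ ⊤ ∧ ∀ t ∈ T, dist (f t) (g t) ≤ ε),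
    eVariationOn g T

/-- The oscillation (diameter of the image) of `f` on `T`, valued in `[0,∞]`. -/
noncomputable def oscOn {M : Type*} [MetricSpace M] (f : ℝ → M) (T : Set ℝ) : ℝ≥0∞ :=
  ⨆ s ∈ T, ⨆ t ∈ T, edist (f s) (f t)

/-! The `≤` half of the identity is immediate, as `f` itself competes in `approxVar f T ε` when
its variation is finite. For `≥`, if `approxVar f T ε < v` for all `ε > 0`, then `f` is the uniform
limit of functions `gₙ` with `eVariationOn gₙ T < v`, and lower semicontinuity of the variation
gives `eVariationOn f T ≤ v`. The limit as `ε → 0⁺` is the supremum because `approxVar f T` is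
antitone. -/

section Variation

variable {α E : Type*} [LinearOrder α]

theorem eVariationOn_le_of_tendsto [PseudoEMetricSpace E] {ι : Type*} {p : Filter ι} [p.NeBot]
    {F : ι → α → E} {f : α → E} {s : Set α} (hF : ∀ x ∈ s, Tendsto (fun i => F i x) p (𝓝 (f x)))
    {v : ℝ≥0∞} (hv : ∀ᶠ i in p, eVariationOn (F i) s ≤ v) : eVariationOn f s ≤ v := by
  refine le_of_not_gt fun hlt => ?_
  obtain ⟨i, hgt, hle⟩ := ((eVariationOn.lowerSemicontinuous_aux hF hlt).and hv).exists
  exact hle.not_gt hgt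

theorem eVariationOn_le_of_forall_dist_le [PseudoMetricSpace E] {f : α → E} {s : Set α}
    {v : ℝ≥0∞} (h : ∀ ε > (0 : ℝ), ∃ g : α → E, (∀ t ∈ s, dist (f t) (g t) ≤ ε) ∧
      eVariationOn g s ≤ v) :
    eVariationOn f s ≤ v := by
  choose g hg using fun n : ℕ => h (1 / (n + 1)) Nat.one_div_pos_of_nat
  refine eVariationOn_le_of_tendsto (p := atTop) (fun t ht => ?_) (Eventually.of_forall
    fun n => (hg n).2)
  refine tendsto_iff_dist_tendsto_zero.2 <| squeeze_zero (fun _ => dist_nonneg)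
    (fun n => ?_) tendsto_one_div_add_atTop_nhds_zero_nat
  rw [dist_comm]
  exact (hg n).1 t ht

end Variation

section ApproxVar

variable {M : Type*} [MetricSpace M] (f : ℝ → M) (T : Set ℝ)

theorem approxVar_antitone : Antitone (approxVar f T) := fun _ _ hab =>
  iInf_mono fun _ => iInf_mono' fun hg => ⟨⟨hg.1, fun t ht => (hg.2 t ht).trans hab⟩, le_rfl⟩

theorem approxVar_le_eVariationOn {ε : ℝ} (hε : 0 ≤ ε) :
    approxVar f T ε ≤ eVariationOn f T := by
  by_cases hf : eVariationOn f T = ⊤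
  · simp [hf]
  · exact iInf₂_le f ⟨hf, fun t _ => by simpa using hε⟩

variable {f T} in
theorem exists_dist_le_eVariationOn_lt_of_approxVar_lt {ε : ℝ} {v : ℝ≥0∞}
    (h : approxVar f T ε < v) :
    ∃ g : ℝ → M, (∀ t ∈ T, dist (f t) (g t) ≤ ε) ∧ eVariationOn g T < v := by
  obtain ⟨g, hg⟩ := iInf_lt_iff.1 h
  obtain ⟨hgf, hgv⟩ := iInf_lt_iff.1 hg
  exact ⟨g, hgf.2, hgv⟩

theorem eVariationOn_le_iSup_approxVar :
    eVariationOn f T ≤ ⨆ (ε : ℝ) (_ : 0 < ε), approxVar f T ε := by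
  refine le_of_forall_gt_imp_ge_of_dense fun v hv => eVariationOn_le_of_forall_dist_le
    fun ε hε => ?_
  obtain ⟨g, hgf, hgv⟩ := exists_dist_le_eVariationOn_lt_of_approxVar_lt
    ((le_iSup₂ (f := fun ε (_ : 0 < ε) => approxVar f T ε) ε hε).trans_lt hv)
  exact ⟨g, hgf, hgv.le⟩

end ApproxVar

theorem iSup_approxVar_eq_variation_general {M : Type*} [MetricSpace M] (f : ℝ → M) (T : Set ℝ) :
    (⨆ (ε : ℝ) (_ : 0 < ε), approxVar f T ε) = eVariationOn f T ∧
    Tendsto (fun ε => approxVar f T ε) (𝓝[>] (0 : ℝ)) (𝓝 (eVariationOn f T)) := by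
  have hsup : (⨆ (ε : ℝ) (_ : 0 < ε), approxVar f T ε) = eVariationOn f T :=
    le_antisymm (iSup₂_le fun _ hε => approxVar_le_eVariationOn f T hε.le)
      (eVariationOn_le_iSup_approxVar f T)
  refine ⟨hsup, ?_⟩
  have hlim := (approxVar_antitone f T).tendsto_nhdsGT 0
  rw [sSup_image] at hlim
  exact hsup ▸ hlim

theorem iSup_approxVar_eq_variation {M : Type*} [MetricSpace M] (f : ℝ → M) (T : Set ℝ)
    (hT : T.Nonempty) :
    (⨆ (ε : ℝ) (_ : 0 < ε), approxVar f T ε) = eVariationOn f T ∧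
    Tendsto (fun ε => approxVar f T ε) (𝓝[>] (0 : ℝ)) (𝓝 (eVariationOn f T)) :=
  iSup_approxVar_eq_variation_general f T
end

section
/- inf_{ε>0} (V_ε(f,T) + ε) ≤ |f(T)| ≤ inf_{ε>0} (V_ε(f,T) + 2ε), with all quantities in [0,∞]. -/
/-!
If `ε` exceeds the oscillation of `f`, a constant function is `ε`-close to `f`, so
`V_ε(f) = 0`; letting `ε ↓ |f(T)|` gives the lower bound. Conversely, for every `g`
that is `ε`-close to `f`, the triangle inequality gives `|f(T)| ≤ |g(T)| + 2ε`, and the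
oscillation of `g` is bounded by its variation.
-/

open Filter Set
open scoped ENNReal Topology

section Oscillation

variable {M : Type*} [MetricSpace M] {f g : ℝ → M} {T : Set ℝ}

theorem edist_le_oscOn {s t : ℝ} (hs : s ∈ T) (ht : t ∈ T) :
    edist (f s) (f t) ≤ oscOn f T :=
  le_iSup₂_of_le s hs <| le_iSup₂_of_le (f := fun u (_ : u ∈ T) => edist (f s) (f u)) t ht le_rfl

theorem oscOn_le_eVariationOn : oscOn g T ≤ eVariationOn g T :=
  iSup₂_le fun _ hs => iSup₂_le fun _ ht => eVariationOn.edist_le g hs ht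

theorem oscOn_le_oscOn_add_of_edist_le {r : ℝ≥0∞} (hfg : ∀ t ∈ T, edist (f t) (g t) ≤ r) :
    oscOn f T ≤ oscOn g T + 2 * r :=
  iSup₂_le fun s hs => iSup₂_le fun t ht =>
    calc edist (f s) (f t)
        ≤ edist (f s) (g s) + edist (g s) (g t) + edist (g t) (f t) := edist_triangle4 _ _ _ _
      _ ≤ r + oscOn g T + r := by
          gcongr
          · exact hfg s hs
          · exact edist_le_oscOn hs ht
          · rw [edist_comm]; exact hfg t ht
      _ = oscOn g T + 2 * r := by ring

end Oscillation

section ApproxVar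

variable {M : Type*} [MetricSpace M] {f : ℝ → M} {T : Set ℝ} {ε : ℝ}

theorem oscOn_le_approxVar_add (hε : 0 ≤ ε) :
    oscOn f T ≤ approxVar f T ε + ENNReal.ofReal (2 * ε) := by
  rw [approxVar, ENNReal.iInf_add]
  refine le_iInf fun g => ?_
  rw [ENNReal.iInf_add]
  refine le_iInf fun ⟨_, hfg⟩ => ?_
  have hfg' : ∀ t ∈ T, edist (f t) (g t) ≤ ENNReal.ofReal ε := fun t ht =>
    (edist_le_ofReal hε).2 (hfg t ht)
  calc oscOn f T ≤ oscOn g T + 2 * ENNReal.ofReal ε := oscOn_le_oscOn_add_of_edist_le hfg'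
    _ ≤ eVariationOn g T + ENNReal.ofReal (2 * ε) := by
        rw [ENNReal.ofReal_mul zero_le_two, ENNReal.ofReal_ofNat]
        gcongr
        exact oscOn_le_eVariationOn

theorem approxVar_eq_zero_of_oscOn_le (hT : T.Nonempty) (hε : 0 ≤ ε)
    (hosc : oscOn f T ≤ ENNReal.ofReal ε) : approxVar f T ε = 0 := by
  obtain ⟨t₀, ht₀⟩ := hT
  have hconst : eVariationOn (fun _ : ℝ => f t₀) T = 0 :=
    eVariationOn.constant_on (subsingleton_singleton.anti (image_subset_iff.2 fun _ _ => rfl))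
  refine le_antisymm (iInf₂_le_of_le (fun _ => f t₀) ⟨by simp [hconst], fun t ht => ?_⟩
    hconst.le) bot_le
  exact (edist_le_ofReal hε).1 ((edist_le_oscOn ht ht₀).trans hosc)

theorem iInf_approxVar_add_le_oscOn (hT : T.Nonempty) :
    ⨅ (ε : ℝ) (_ : 0 < ε), (approxVar f T ε + ENNReal.ofReal ε) ≤ oscOn f T := by
  refine le_of_forall_gt_imp_ge_of_dense fun c hc => ?_
  rcases eq_or_ne c ⊤ with rfl | hc_top
  · exact le_top
  have hc_pos : 0 < c.toReal := ENNReal.toReal_pos (pos_of_gt hc).ne' hc_top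
  have hosc : oscOn f T ≤ ENNReal.ofReal c.toReal := by
    rw [ENNReal.ofReal_toReal hc_top]; exact hc.le
  calc ⨅ (ε : ℝ) (_ : 0 < ε), (approxVar f T ε + ENNReal.ofReal ε)
      ≤ approxVar f T c.toReal + ENNReal.ofReal c.toReal := biInf_le _ hc_pos
    _ = c := by
        rw [approxVar_eq_zero_of_oscOn_le hT hc_pos.le hosc, zero_add,
          ENNReal.ofReal_toReal hc_top]

end ApproxVar

theorem iInf_approxVar_osc_bounds {M : Type*} [MetricSpace M] (f : ℝ → M) (T : Set ℝ)
    (hT : T.Nonempty) :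
    (⨅ (ε : ℝ) (_ : 0 < ε), (approxVar f T ε + ENNReal.ofReal ε)) ≤ oscOn f T ∧
    oscOn f T ≤ ⨅ (ε : ℝ) (_ : 0 < ε), (approxVar f T ε + ENNReal.ofReal (2 * ε)) :=
  ⟨iInf_approxVar_add_le_oscOn hT, le_iInf₂ fun _ hε => oscOn_le_approxVar_add hε.le⟩
end

section
/- (Semi-additivity) For every ε > 0 and t ∈ T, with T₁ = T ∩ (−∞,t] and T₂ = T ∩ [t,∞), one has V_ε(f,T₁) + V_ε(f,T₂) ≤ V_ε(f,T) ≤ V_ε(f,T₁) + V_ε(f,T₂) + 2ε. -/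
open Filter Set
open scoped ENNReal Topology

/-!
Restricting an `ε`-approximant of `f` on `T` to the two halves and using additivity of the
variation gives the lower bound. For the upper bound, glue almost optimal approximants of the two
halves at `t`: the glued function is an `ε`-approximant on `T` whose variation exceeds the sum only
by the jump at `t`, and that jump is at most `2ε` because both values at `t` are `ε`-close to `f t`.
-/

section eVariationOn

variable {α : Type*} [LinearOrder α] {E : Type*} [PseudoEMetricSpace E]

theorem isGreatest_inter_Iic {T : Set α} {t : α} (ht : t ∈ T) : IsGreatest (T ∩ Iic t) t :=
  ⟨⟨ht, self_mem_Iic⟩, fun _ hx => hx.2⟩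

theorem isLeast_inter_Ici {T : Set α} {t : α} (ht : t ∈ T) : IsLeast (T ∩ Ici t) t :=
  ⟨⟨ht, self_mem_Ici⟩, fun _ hx => hx.2⟩

theorem eVariationOn_eq_inter_Iic_add_inter_Ici (g : α → E) {T : Set α} {t : α} (ht : t ∈ T) :
    eVariationOn g T = eVariationOn g (T ∩ Iic t) + eVariationOn g (T ∩ Ici t) := by
  rw [← eVariationOn.union g (isGreatest_inter_Iic ht) (isLeast_inter_Ici ht),
    ← inter_union_distrib_left, Iic_union_Ici, inter_univ]

theorem eVariationOn_le_add_of_edist_le {F G : Type*} [PseudoEMetricSpace F]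
    [PseudoEMetricSpace G] {f : α → E} {g : α → F} {k : α → G} {s : Set α}
    (h : ∀ x ∈ s, ∀ y ∈ s, edist (f x) (f y) ≤ edist (g x) (g y) + edist (k x) (k y)) :
    eVariationOn f s ≤ eVariationOn g s + eVariationOn k s := by
  refine iSup_le fun ⟨n, u, hu, us⟩ => ?_
  calc ∑ i ∈ Finset.range n, edist (f (u (i + 1))) (f (u i))
      ≤ ∑ i ∈ Finset.range n,
          (edist (g (u (i + 1))) (g (u i)) + edist (k (u (i + 1))) (k (u i))) :=
        Finset.sum_le_sum fun i _ => h _ (us _) _ (us _)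
    _ = ∑ i ∈ Finset.range n, edist (g (u (i + 1))) (g (u i)) +
          ∑ i ∈ Finset.range n, edist (k (u (i + 1))) (k (u i)) := Finset.sum_add_distrib
    _ ≤ eVariationOn g s + eVariationOn k s :=
        add_le_add (eVariationOn.sum_le hu us) (eVariationOn.sum_le hu us)

/-- The change is dominated by a function `Bool → E` composed with the map `x ↦ decide (x = m)`,
which is monotone on `s` because `m` is its greatest element. -/
theorem eVariationOn_update_le_of_isGreatest [DecidableEq α] (g : α → E) {s : Set α} {m : α}
    (hm : IsGreatest s m) (b : E) :
    eVariationOn (Function.update g m b) s ≤ eVariationOn g s + edist (g m) b := by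
  set K : Bool → E := fun i => if i then b else g m
  set ψ : α → Bool := fun x => decide (x = m)
  have hψ : MonotoneOn ψ s := by
    intro x _ y hy hxy
    by_cases hx : x = m
    · simp [ψ, hx ▸ le_antisymm (hm.2 hy) (hx ▸ hxy)]
    · simp [ψ, hx]
  have hjump : ∀ x y, edist (Function.update g m b x) (Function.update g m b y) ≤
      edist (g x) (g y) + edist ((K ∘ ψ) x) ((K ∘ ψ) y) := by
    intro x y
    by_cases hx : x = m <;> by_cases hy : y = m
    · simp [hx, hy]
    · subst hx
      simpa [K, ψ, hy, add_comm] using edist_triangle b (g x) (g y)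
    · subst hy
      simpa [K, ψ, hx] using edist_triangle (g x) (g y) b
    · simp [K, ψ, hx, hy]
  have hK : eVariationOn K univ = edist (g m) b := by
    rw [show (univ : Set Bool) = {false, true} by ext i; cases i <;> simp,
      eVariationOn.pair]
    simp [K]
  calc eVariationOn (Function.update g m b) s
      ≤ eVariationOn g s + eVariationOn (K ∘ ψ) s :=
        eVariationOn_le_add_of_edist_le fun x _ y _ => hjump x y
    _ ≤ eVariationOn g s + eVariationOn K univ :=
        add_le_add le_rfl (eVariationOn.comp_le_of_monotoneOn K ψ hψ (mapsTo_univ _ _))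
    _ = eVariationOn g s + edist (g m) b := by rw [hK]

end eVariationOn

section approxVar

variable {M : Type*} [MetricSpace M] {f : ℝ → M} {T : Set ℝ} {ε : ℝ}

theorem approxVar_le_eVariationOn_s8 {g : ℝ → M} (hg : eVariationOn g T ≠ ⊤)
    (hfg : ∀ x ∈ T, dist (f x) (g x) ≤ ε) : approxVar f T ε ≤ eVariationOn g T :=
  iInf₂_le g ⟨hg, hfg⟩

theorem approxVar_inter_Iic_add_approxVar_inter_Ici_le {t : ℝ} (ht : t ∈ T) :
    approxVar f (T ∩ Iic t) ε + approxVar f (T ∩ Ici t) ε ≤ approxVar f T ε := by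
  refine le_iInf₂ fun g ⟨hg, hfg⟩ => ?_
  have hg₁ := ne_top_of_le_ne_top hg (eVariationOn.mono g (inter_subset_left (t := Iic t)))
  have hg₂ := ne_top_of_le_ne_top hg (eVariationOn.mono g (inter_subset_left (t := Ici t)))
  rw [eVariationOn_eq_inter_Iic_add_inter_Ici g ht]
  exact add_le_add (approxVar_le_eVariationOn_s8 hg₁ fun x hx => hfg x hx.1)
    (approxVar_le_eVariationOn_s8 hg₂ fun x hx => hfg x hx.1)

theorem approxVar_le_eVariationOn_add_eVariationOn_add {t : ℝ} (ht : t ∈ T) {g₁ g₂ : ℝ → M}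
    (hg₁ : eVariationOn g₁ (T ∩ Iic t) ≠ ⊤) (hfg₁ : ∀ x ∈ T ∩ Iic t, dist (f x) (g₁ x) ≤ ε)
    (hg₂ : eVariationOn g₂ (T ∩ Ici t) ≠ ⊤) (hfg₂ : ∀ x ∈ T ∩ Ici t, dist (f x) (g₂ x) ≤ ε) :
    approxVar f T ε ≤
      eVariationOn g₁ (T ∩ Iic t) + eVariationOn g₂ (T ∩ Ici t) + ENNReal.ofReal (2 * ε) := by
  classical
  set g := (Iio t).piecewise g₁ g₂
  have hleft : EqOn g (Function.update g₁ t (g₂ t)) (T ∩ Iic t) := by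
    intro x hx
    rcases (mem_Iic.1 hx.2).lt_or_eq with hxt | rfl
    · simp [g, hxt, hxt.ne]
    · simp [g]
  have hright : EqOn g g₂ (T ∩ Ici t) := fun x hx => by simp [g, not_lt.2 (mem_Ici.1 hx.2)]
  have hjump : edist (g₁ t) (g₂ t) ≤ ENNReal.ofReal (2 * ε) := by
    rw [edist_dist, two_mul]
    exact ENNReal.ofReal_le_ofReal ((dist_triangle_left _ _ (f t)).trans
      (add_le_add (hfg₁ t ⟨ht, self_mem_Iic⟩) (hfg₂ t ⟨ht, self_mem_Ici⟩)))
  have hvar : eVariationOn g T ≤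
      eVariationOn g₁ (T ∩ Iic t) + eVariationOn g₂ (T ∩ Ici t) + ENNReal.ofReal (2 * ε) := by
    rw [eVariationOn_eq_inter_Iic_add_inter_Ici g ht, eVariationOn.congr hleft,
      eVariationOn.congr hright, add_right_comm]
    gcongr
    exact (eVariationOn_update_le_of_isGreatest g₁ (isGreatest_inter_Iic ht) (g₂ t)).trans
      (add_le_add le_rfl hjump)
  have hfg : ∀ x ∈ T, dist (f x) (g x) ≤ ε := by
    intro x hx
    by_cases hxt : x < t
    · simpa [g, hxt] using hfg₁ x ⟨hx, hxt.le⟩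
    · simpa [g, hxt] using hfg₂ x ⟨hx, not_lt.1 hxt⟩
  exact (approxVar_le_eVariationOn_s8 (ne_top_of_le_ne_top (by finiteness) hvar) hfg).trans hvar

theorem approxVar_le_approxVar_inter_Iic_add_approxVar_inter_Ici_add {t : ℝ} (ht : t ∈ T) :
    approxVar f T ε ≤
      approxVar f (T ∩ Iic t) ε + approxVar f (T ∩ Ici t) ε + ENNReal.ofReal (2 * ε) := by
  simp only [approxVar, ENNReal.iInf_add, ENNReal.add_iInf]
  exact le_iInf₂ fun g₂ ⟨hg₂, hfg₂⟩ => le_iInf₂ fun g₁ ⟨hg₁, hfg₁⟩ =>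
    approxVar_le_eVariationOn_add_eVariationOn_add ht hg₁ hfg₁ hg₂ hfg₂

end approxVar

theorem approxVar_semiadditive_general {M : Type*} [MetricSpace M] (f : ℝ → M) (T : Set ℝ)
    {ε : ℝ} {t : ℝ} (ht : t ∈ T) :
    approxVar f (T ∩ Set.Iic t) ε + approxVar f (T ∩ Set.Ici t) ε ≤ approxVar f T ε ∧
    approxVar f T ε ≤
      approxVar f (T ∩ Set.Iic t) ε + approxVar f (T ∩ Set.Ici t) ε + ENNReal.ofReal (2 * ε) :=
  ⟨approxVar_inter_Iic_add_approxVar_inter_Ici_le ht,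
    approxVar_le_approxVar_inter_Iic_add_approxVar_inter_Ici_add ht⟩

theorem approxVar_semiadditive {M : Type*} [MetricSpace M] (f : ℝ → M) (T : Set ℝ)
    (hT : T.Nonempty) {ε : ℝ} (hε : 0 < ε) {t : ℝ} (ht : t ∈ T) :
    approxVar f (T ∩ Set.Iic t) ε + approxVar f (T ∩ Set.Ici t) ε ≤ approxVar f T ε ∧
    approxVar f T ε ≤
      approxVar f (T ∩ Set.Iic t) ε + approxVar f (T ∩ Set.Ici t) ε + ENNReal.ofReal (2 * ε) :=
  approxVar_semiadditive_general f T ht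
end

section
/- A function f : [a,b] → M into a complete metric space is regulated (left limits exist at each point of (a,b] and right limits at each point of [a,b)) if and only if V_ε(f,[a,b]) < ∞ for every ε > 0. -/
open Filter Set
open scoped ENNReal Topology

/-!
If `f` has one-sided limits, let `S` be the set of `t` such that `f` is uniformly `ε`-close on
`[a, t]` to a function of bounded variation. Near any point, `f` is `ε`-close to a step function
with at most three values, which has bounded variation; gluing it to an approximant on `[a, s]`
shows that `S ∩ [a, b]` is closed and contains a right neighbourhood of each of its points below
`b`, so `b ∈ S` by real induction. Conversely, functions of bounded variation have one-sided limits,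
and a function that is, for every `ε`, uniformly `ε`-close to a function with a limit is Cauchy
along the filter, hence converges because `M` is complete.
-/

section

variable {α E : Type*} [LinearOrder α] [PseudoMetricSpace E]

theorem BoundedVariationOn.Icc_of_eqOn_Ioo {g : α → E} {s t : α} {y : E}
    (h : EqOn g (fun _ ↦ y) (Ioo s t)) : BoundedVariationOn g (Icc s t) := by
  -- on `Icc s t`, `g` factors through a monotone map into `Fin 3`
  let φ : α → Fin 3 := fun x ↦ if x ≤ s then 0 else if x < t then 1 else 2
  have hφ : Monotone φ := by
    intro x x' hxx'
    simp only [φ]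
    split_ifs <;> first | decide | order
  have hg : EqOn g (![g s, y, g t] ∘ φ) (Icc s t) := by
    intro x hx
    simp only [φ, Function.comp_apply]
    split_ifs with h₁ h₂
    · simp [le_antisymm h₁ hx.1]
    · simpa using h ⟨not_le.1 h₁, h₂⟩
    · simp [le_antisymm hx.2 (not_lt.1 h₂)]
  rw [BoundedVariationOn, eVariationOn.eq_of_eqOn hg]
  exact ne_top_of_le_ne_top (BoundedVariationOn.of_finite _ univ)
    (eVariationOn.comp_le_of_monotoneOn _ φ (hφ.monotoneOn _) (mapsTo_univ _ _))

theorem BoundedVariationOn.Icc_add_Icc {g : α → E} {a b c : α} (hab : a ≤ b) (hbc : b ≤ c)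
    (h₁ : BoundedVariationOn g (Icc a b)) (h₂ : BoundedVariationOn g (Icc b c)) :
    BoundedVariationOn g (Icc a c) := by
  have := eVariationOn.Icc_add_Icc g hab hbc (mem_univ b)
  simp only [univ_inter] at this
  rw [BoundedVariationOn, ← this]
  exact ENNReal.add_ne_top.2 ⟨h₁, h₂⟩

end

theorem exists_tendsto_of_forall_eventually_dist_le {α M : Type*} [PseudoMetricSpace M]
    [CompleteSpace M] {F : Filter α} {f : α → M}
    (h : ∀ ε > 0, ∃ g : α → M, (∃ L, Tendsto g F (𝓝 L)) ∧ ∀ᶠ x in F, dist (f x) (g x) ≤ ε) :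
    ∃ L, Tendsto f F (𝓝 L) := by
  rcases F.eq_or_neBot with rfl | hF
  · obtain ⟨-, ⟨L, -⟩, -⟩ := h 1 one_pos
    exact ⟨L, tendsto_bot⟩
  refine CompleteSpace.complete (Metric.cauchy_iff.2 ⟨map_neBot, fun ε hε ↦ ?_⟩)
  obtain ⟨g, ⟨L, hgL⟩, hfg⟩ := h (ε / 4) (by positivity)
  have hgL' : ∀ᶠ x in F, dist (g x) L < ε / 4 := Metric.tendsto_nhds.1 hgL _ (by positivity)
  refine ⟨f '' {x | dist (f x) (g x) ≤ ε / 4 ∧ dist (g x) L < ε / 4},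
    image_mem_map (hfg.and hgL'), ?_⟩
  rintro - ⟨x, hx, rfl⟩ - ⟨y, hy, rfl⟩
  calc dist (f x) (f y) ≤ dist (f x) L + dist (f y) L := dist_triangle_right _ _ _
    _ ≤ dist (f x) (g x) + dist (g x) L + (dist (f y) (g y) + dist (g y) L) :=
        add_le_add (dist_triangle _ _ _) (dist_triangle _ _ _)
    _ < ε := by linarith [hx.1, hx.2, hy.1, hy.2]

def BVApproximable {M : Type*} [PseudoMetricSpace M] (f : ℝ → M) (ε : ℝ) (s : Set ℝ) : Prop :=
  ∃ g : ℝ → M, BoundedVariationOn g s ∧ ∀ x ∈ s, dist (f x) (g x) ≤ ε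

theorem approxVar_lt_top_iff {M : Type*} [MetricSpace M] {f : ℝ → M} {s : Set ℝ} {ε : ℝ} :
    approxVar f s ε < ⊤ ↔ BVApproximable f ε s := by
  simp only [approxVar, iInf_lt_iff, BVApproximable, BoundedVariationOn]
  constructor
  · rintro ⟨g, hg, -⟩
    exact ⟨g, hg⟩
  · rintro ⟨g, hg⟩
    exact ⟨g, hg, hg.1.lt_top⟩

namespace BVApproximable

variable {M : Type*} [PseudoMetricSpace M] {f : ℝ → M} {ε a b c : ℝ} {L : M}

theorem mono {s t : Set ℝ} (h : BVApproximable f ε t) (hst : s ⊆ t) : BVApproximable f ε s :=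
  let ⟨g, hg, hfg⟩ := h
  ⟨g, hg.mono hst, fun x hx ↦ hfg x (hst hx)⟩

theorem of_subsingleton {s : Set ℝ} (hε : 0 ≤ ε) (hs : s.Subsingleton) : BVApproximable f ε s :=
  ⟨f, .of_subsingleton hs, fun x _ ↦ by simpa using hε⟩

theorem extend (h : BVApproximable f ε (Icc a b)) (hab : a ≤ b) (hbc : b ≤ c) (hε : 0 ≤ ε)
    (hL : ∀ x ∈ Ioo b c, dist (f x) L ≤ ε) : BVApproximable f ε (Icc a c) := by
  obtain ⟨g, hg, hfg⟩ := h
  refine ⟨fun x ↦ if x ≤ b then g x else if x < c then L else f c, ?_, fun x hx ↦ ?_⟩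
  · refine .Icc_add_Icc hab hbc ?_ (.Icc_of_eqOn_Ioo (y := L) fun x hx ↦ ?_)
    · exact (eVariationOn.eq_of_eqOn fun x hx ↦ if_pos hx.2).trans_ne hg
    · simp [not_le.2 hx.1, hx.2]
  · dsimp only
    split_ifs with h₁ h₂
    · exact hfg x ⟨hx.1, h₁⟩
    · exact hL x ⟨not_le.1 h₁, h₂⟩
    · simpa [le_antisymm hx.2 (not_lt.1 h₂)] using hε

theorem eventually_of_tendsto_left (hac : a < c) (hf : Tendsto f (𝓝[Ico a c] c) (𝓝 L))
    (hε : 0 < ε) : ∀ᶠ t in 𝓝[<] c, BVApproximable f ε (Icc a t) → BVApproximable f ε (Icc a c) := by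
  rw [nhdsWithin_Ico_eq_nhdsLT hac] at hf
  obtain ⟨l, hl, hlc⟩ := mem_nhdsLT_iff_exists_Ioo_subset.1 (hf (Metric.closedBall_mem_nhds L hε))
  filter_upwards [Ioo_mem_nhdsLT (max_lt hl hac)] with t ht h
  exact h.extend ((le_max_right _ _).trans ht.1.le) ht.2.le hε.le
    fun x hx ↦ hlc ⟨(le_max_left _ _).trans_lt (ht.1.trans hx.1), hx.2⟩

theorem eventually_of_tendsto_right (h : BVApproximable f ε (Icc a b)) (hab : a ≤ b)
    (hbc : b < c) (hf : Tendsto f (𝓝[Ioc b c] b) (𝓝 L)) (hε : 0 < ε) :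
    ∀ᶠ t in 𝓝[>] b, BVApproximable f ε (Icc a t) := by
  rw [nhdsWithin_Ioc_eq_nhdsGT hbc] at hf
  obtain ⟨u, hu, hbu⟩ := mem_nhdsGT_iff_exists_Ioo_subset.1 (hf (Metric.closedBall_mem_nhds L hε))
  filter_upwards [Ioo_mem_nhdsGT hu] with t ht
  exact h.extend hab ht.1.le hε.le fun x hx ↦ hbu ⟨hx.1, hx.2.trans ht.2⟩

end BVApproximable

section

variable {M : Type*} [PseudoMetricSpace M] {f : ℝ → M} {a b : ℝ}

theorem bvApproximable_Icc_of_forall_tendsto (hab : a ≤ b)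
    (hl : ∀ τ ∈ Ioc a b, ∃ L : M, Tendsto f (𝓝[Ico a τ] τ) (𝓝 L))
    (hr : ∀ τ ∈ Ico a b, ∃ L : M, Tendsto f (𝓝[Ioc τ b] τ) (𝓝 L))
    {ε : ℝ} (hε : 0 < ε) : BVApproximable f ε (Icc a b) := by
  set S := {t | BVApproximable f ε (Icc a t)}
  have hS : IsLowerSet S := fun _ _ hts h ↦ h.mono (Icc_subset_Icc_right hts)
  have haS : a ∈ S := .of_subsingleton hε.le (by simp)
  have hclosed : IsClosed (S ∩ Icc a b) := isClosed_of_closure_subset fun c hc ↦ by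
    have hcI : c ∈ Icc a b := closure_minimal inter_subset_right isClosed_Icc hc
    refine ⟨?_, hcI⟩
    rcases hcI.1.eq_or_lt with rfl | hac
    · exact haS
    have hbelow : ∀ s < c, s ∈ S := fun s hs ↦ by
      obtain ⟨t, hst, htS, -⟩ := mem_closure_iff_nhds.1 hc (Ioi s) (Ioi_mem_nhds hs)
      exact hS hst.le htS
    obtain ⟨L, hL⟩ := hl c ⟨hac, hcI.2⟩
    obtain ⟨s, hsc, hs⟩ := ((BVApproximable.eventually_of_tendsto_left hac hL hε).and
      (eventually_nhdsWithin_of_forall hbelow)).exists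
    exact hsc hs
  refine hclosed.Icc_subset_of_forall_mem_nhdsWithin haS (fun x ⟨hxS, hxI⟩ ↦ ?_) ⟨hab, le_rfl⟩
  obtain ⟨L, hL⟩ := hr x hxI
  exact hxS.eventually_of_tendsto_right hxI.1 hxI.2 hL hε

variable [CompleteSpace M]

theorem exists_tendsto_left_of_forall_bvApproximable {s : Set ℝ}
    (h : ∀ ε > 0, BVApproximable f ε s) (τ : ℝ) : ∃ L, Tendsto f (𝓝[s ∩ Iio τ] τ) (𝓝 L) := by
  refine exists_tendsto_of_forall_eventually_dist_le fun ε hε ↦ ?_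
  obtain ⟨g, hg, hfg⟩ := h ε hε
  exact ⟨g, hg.exists_tendsto_left τ, eventually_nhdsWithin_of_forall fun x hx ↦ hfg x hx.1⟩

theorem exists_tendsto_right_of_forall_bvApproximable {s : Set ℝ}
    (h : ∀ ε > 0, BVApproximable f ε s) (τ : ℝ) : ∃ L, Tendsto f (𝓝[s ∩ Ioi τ] τ) (𝓝 L) := by
  refine exists_tendsto_of_forall_eventually_dist_le fun ε hε ↦ ?_
  obtain ⟨g, hg, hfg⟩ := h ε hε
  exact ⟨g, hg.exists_tendsto_right τ, eventually_nhdsWithin_of_forall fun x hx ↦ hfg x hx.1⟩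

end

theorem regulated_iff_approxVar_lt_top {M : Type*} [MetricSpace M] [CompleteSpace M]
    {a b : ℝ} (hab : a < b) (f : ℝ → M) :
    ((∀ τ ∈ Set.Ioc a b, ∃ L : M, Tendsto f (𝓝[Set.Ico a τ] τ) (𝓝 L)) ∧
      (∀ τ ∈ Set.Ico a b, ∃ L : M, Tendsto f (𝓝[Set.Ioc τ b] τ) (𝓝 L))) ↔
    (∀ ε : ℝ, 0 < ε → approxVar f (Set.Icc a b) ε < ⊤) := by
  simp only [approxVar_lt_top_iff]
  refine ⟨fun ⟨hl, hr⟩ ε hε ↦ bvApproximable_Icc_of_forall_tendsto hab.le hl hr hε,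
    fun h ↦ ⟨fun τ hτ ↦ ?_, fun τ hτ ↦ ?_⟩⟩
  · have hIco : Icc a b ∩ Iio τ = Ico a τ := by grind
    exact hIco ▸ exists_tendsto_left_of_forall_bvApproximable h τ
  · have hIoc : Icc a b ∩ Ioi τ = Ioc τ b := by grind
    exact hIoc ▸ exists_tendsto_right_of_forall_bvApproximable h τ
end

section
/- If f_j ⇉ f uniformly on T, then for every ε > 0: limsup_{j→∞} V_ε(f_j,T) ≤ V_{ε'}(f,T) for every 0 < ε' < ε. -/
open Filter Set
open scoped ENNReal Topology

theorem approxVar_add_le_of_dist_le {M : Type*} [MetricSpace M] {f h : ℝ → M} {T : Set ℝ}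
    {δ ε : ℝ} (hhf : ∀ t ∈ T, dist (h t) (f t) ≤ δ) :
    approxVar h T (δ + ε) ≤ approxVar f T ε :=
  le_iInf₂ fun g ⟨hg, hfg⟩ => iInf₂_le g ⟨hg, fun t ht =>
    (dist_triangle _ _ _).trans (add_le_add (hhf t ht) (hfg t ht))⟩

theorem limsup_approxVar_le_general {M : Type*} [MetricSpace M]
    (T : Set ℝ) (f : ℝ → M) (fj : ℕ → ℝ → M)
    (huc : TendstoUniformlyOn fj f atTop T)
    {ε ε' : ℝ} (hε'ε : ε' < ε) :
    Filter.limsup (fun j => approxVar (fj j) T ε) Filter.atTop ≤ approxVar f T ε' := by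
  have hclose : ∀ᶠ j in atTop, ∀ t ∈ T, dist (f t) (fj j t) < ε - ε' :=
    Metric.tendstoUniformlyOn_iff.mp huc (ε - ε') (sub_pos.mpr hε'ε)
  refine limsup_le_of_le (by isBoundedDefault) ?_
  filter_upwards [hclose] with j hj
  calc approxVar (fj j) T ε = approxVar (fj j) T (ε - ε' + ε') := by rw [sub_add_cancel]
    _ ≤ approxVar f T ε' :=
        approxVar_add_le_of_dist_le fun t ht => (dist_comm (fj j t) (f t)).trans_le (hj t ht).le

theorem limsup_approxVar_le {M : Type*} [MetricSpace M]
    (T : Set ℝ) (hT : T.Nonempty) (f : ℝ → M) (fj : ℕ → ℝ → M)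
    (huc : TendstoUniformlyOn fj f atTop T)
    {ε ε' : ℝ} (hε' : 0 < ε') (hε'ε : ε' < ε) :
    Filter.limsup (fun j => approxVar (fj j) T ε) Filter.atTop ≤ approxVar f T ε' :=
  limsup_approxVar_le_general T f fj huc hε'ε
end

section
/- If (M,d) is a proper metric space and V_ε(f,T) < ∞ for some ε > 0, then the infimum defining V_ε(f,T) is attained: there exists g : T → M of bounded variation with sup_{t∈T} d(f(t),g(t)) ≤ ε and V(g,T) = V_ε(f,T). -/
open Filter Set
open scoped ENNReal Topology

theorem approxVar_attained {M : Type*} [MetricSpace M] [ProperSpace M]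
    (f : ℝ → M) (T : Set ℝ) (hT : T.Nonempty) {ε : ℝ} (hε : 0 < ε)
    (hfin : approxVar f T ε < ⊤) :
    ∃ g : ℝ → M, eVariationOn g T ≠ ⊤ ∧ (∀ t ∈ T, dist (f t) (g t) ≤ ε) ∧
      eVariationOn g T = approxVar f T ε := by
  classical
  set V := approxVar f T ε with hV
  -- a minimizing sequence
  have key : ∀ n : ℕ, ∃ g : ℝ → M,
      (eVariationOn g T ≠ ⊤ ∧ ∀ t ∈ T, dist (f t) (g t) ≤ ε) ∧
      eVariationOn g T < V + ((n : ℝ≥0∞))⁻¹ := by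
    intro n
    have hpos : (0 : ℝ≥0∞) < ((n : ℝ≥0∞))⁻¹ :=
      ENNReal.inv_pos.2 (ENNReal.natCast_ne_top n)
    have hlt : V < V + ((n : ℝ≥0∞))⁻¹ := by
      calc V = V + 0 := (add_zero V).symm
        _ < V + ((n : ℝ≥0∞))⁻¹ := ENNReal.add_lt_add_left hfin.ne hpos
    rw [hV, approxVar] at hlt
    obtain ⟨g, hg⟩ := iInf_lt_iff.1 hlt
    obtain ⟨hgP, hglt⟩ := iInf_lt_iff.1 hg
    exact ⟨g, hgP, hglt⟩
  choose g hgP hglt using key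
  -- the compact product space
  set K : Set (∀ _ : T, M) := Set.univ.pi (fun t : T => Metric.closedBall (f t) ε) with hK
  have hKc : IsCompact K := isCompact_univ_pi fun t => isCompact_closedBall _ _
  set G : ℕ → (∀ _ : T, M) := fun n t => g n t with hG
  have hGK : ∀ n, G n ∈ K := by
    intro n
    rw [hK, Set.mem_univ_pi]
    intro t
    rw [Metric.mem_closedBall, dist_comm]
    exact (hgP n).2 t t.2
  have hle : Filter.map G atTop ≤ 𝓟 K :=
    le_principal_iff.2 (Filter.mem_map.2 (Filter.univ_mem' hGK))
  obtain ⟨h, hhK, hcl⟩ := hKc.exists_clusterPt hle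
  rw [hK, Set.mem_univ_pi] at hhK
  -- the candidate minimizer
  set g₀ : ℝ → M := fun t => if ht : t ∈ T then h ⟨t, ht⟩ else f t with hg₀
  have hg₀T : ∀ t (ht : t ∈ T), g₀ t = h ⟨t, ht⟩ := by
    intro t ht; simp [hg₀, ht]
  have hdist : ∀ t ∈ T, dist (f t) (g₀ t) ≤ ε := by
    intro t ht
    rw [hg₀T t ht, dist_comm]
    simpa [Metric.mem_closedBall] using hhK ⟨t, ht⟩
  -- lower semicontinuity: eVariationOn g₀ T ≤ V
  have hmain : eVariationOn g₀ T ≤ V := by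
    rw [eVariationOn]
    refine iSup_le fun p => ?_
    obtain ⟨m, u, hu, hus⟩ := p
    set Φ : (∀ _ : T, M) → ℝ≥0∞ := fun x =>
      ∑ i ∈ Finset.range m, edist (x ⟨u (i + 1), hus (i + 1)⟩) (x ⟨u i, hus i⟩) with hΦ
    have hΦcont : Continuous Φ := by
      apply continuous_finset_sum
      intro i _
      exact (continuous_apply _).edist (continuous_apply _)
    have hΦh : (∑ i ∈ Finset.range m, edist (g₀ (u (i + 1))) (g₀ (u i))) = Φ h := by
      apply Finset.sum_congr rfl
      intro i _
      rw [hg₀T _ (hus (i + 1)), hg₀T _ (hus i)]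
    show (∑ i ∈ Finset.range m, edist (g₀ (u (i + 1))) (g₀ (u i))) ≤ V
    rw [hΦh]
    by_contra hc
    push_neg at hc
    obtain ⟨c, hVc, hcΦ⟩ := exists_between hc
    have hcV0 : c - V ≠ 0 := by
      simpa [pos_iff_ne_zero] using (tsub_pos_of_lt hVc)
    obtain ⟨n₀, hn₀⟩ := ENNReal.exists_inv_nat_lt hcV0
    have hev : ∀ᶠ n in atTop, eVariationOn (g n) T < c := by
      filter_upwards [Filter.eventually_ge_atTop n₀] with n hn
      have h1 : ((n : ℝ≥0∞))⁻¹ ≤ ((n₀ : ℝ≥0∞))⁻¹ :=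
        ENNReal.inv_le_inv.2 (by exact_mod_cast hn)
      calc eVariationOn (g n) T < V + ((n : ℝ≥0∞))⁻¹ := hglt n
        _ ≤ V + ((n₀ : ℝ≥0∞))⁻¹ := by gcongr
        _ ≤ V + (c - V) := add_le_add le_rfl hn₀.le
        _ = c := add_tsub_cancel_of_le hVc.le
    have hopen : IsOpen {x : (∀ _ : T, M) | c < Φ x} := isOpen_lt continuous_const hΦcont
    have hnhds : ∀ᶠ x in 𝓝 h, c < Φ x := hopen.mem_nhds hcΦ
    have hfreq : ∃ᶠ n in atTop, c < Φ (G n) := by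
      have h1 : ∀ᶠ x in 𝓝 h ⊓ Filter.map G atTop, c < Φ x :=
        Filter.Eventually.filter_mono inf_le_left hnhds
      have h2 : ∃ᶠ x in 𝓝 h ⊓ Filter.map G atTop, c < Φ x := by
        have : (𝓝 h ⊓ Filter.map G atTop).NeBot := hcl
        exact h1.frequently
      have h3 : ∃ᶠ x in Filter.map G atTop, c < Φ x :=
        h2.filter_mono inf_le_right
      exact Filter.frequently_map.mp h3
    have hΦle : ∀ n, Φ (G n) ≤ eVariationOn (g n) T := fun n =>
      eVariationOn.sum_le (f := g n) (n := m) hu hus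
    obtain ⟨n, hn1, hn2⟩ := (hfreq.and_eventually hev).exists
    exact absurd ((hn1.trans_le (hΦle n)).trans hn2) (lt_irrefl c)
  -- conclude
  have hVle : V ≤ eVariationOn g₀ T := by
    rw [hV, approxVar]
    exact iInf₂_le g₀ ⟨(hmain.trans_lt hfin).ne, hdist⟩
  exact ⟨g₀, (hmain.trans_lt hfin).ne, hdist, le_antisymm hmain hVle⟩
end

section
/- If (M,d) is a proper metric space, f_j : T → M converge pointwise on T to f, then V_ε(f,T) ≤ liminf_{j→∞} V_ε(f_j,T) for all ε > 0. -/
open Filter Set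
open scoped ENNReal Topology

theorem approxVar_le_liminf_of_pointwise {M : Type*} [MetricSpace M] [ProperSpace M]
    (T : Set ℝ) (hT : T.Nonempty) (f : ℝ → M) (fj : ℕ → ℝ → M)
    (hconv : ∀ t ∈ T, Tendsto (fun j => fj j t) atTop (𝓝 (f t))) :
    ∀ ε : ℝ, 0 < ε →
      approxVar f T ε ≤ Filter.liminf (fun j => approxVar (fj j) T ε) Filter.atTop := by
  intro ε hε
  set L := Filter.liminf (fun j => approxVar (fj j) T ε) Filter.atTop with hL
  apply ENNReal.le_of_forall_pos_le_add
  intro δ hδ hLtop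
  -- The liminf is frequently exceeded from above by `L + δ`.
  have hlt : L < L + δ :=
    ENNReal.lt_add_right hLtop.ne (by exact_mod_cast hδ.ne')
  have hfreq : ∃ᶠ j in atTop, approxVar (fj j) T ε < L + δ :=
    frequently_lt_of_liminf_lt (by isBoundedDefault) hlt
  -- Extract an ultrafilter refining `atTop` on which this holds eventually.
  set S : Set ℕ := {j | approxVar (fj j) T ε < L + δ} with hS
  have hne : (atTop ⊓ 𝓟 S).NeBot := by
    rwa [Filter.frequently_iff_neBot] at hfreq
  let U : Ultrafilter ℕ := Ultrafilter.of (atTop ⊓ 𝓟 S)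
  have hUle : (U : Filter ℕ) ≤ atTop ⊓ 𝓟 S := Ultrafilter.of_le _
  have hUtop : (U : Filter ℕ) ≤ atTop := hUle.trans inf_le_left
  have hUS : ∀ᶠ j in (U : Filter ℕ), j ∈ S :=
    le_principal_iff.mp (hUle.trans inf_le_right)
  -- Choose near-optimal functions `G j` for `j ∈ S`.
  have hex : ∀ j, ∃ g : ℝ → M,
      j ∈ S → (∀ t ∈ T, dist (fj j t) (g t) ≤ ε) ∧ eVariationOn g T < L + δ := by
    intro j
    by_cases hj : j ∈ S
    · have hj' : approxVar (fj j) T ε < L + δ := hj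
      rw [approxVar, iInf_lt_iff] at hj'
      obtain ⟨g, hg⟩ := hj'
      rw [iInf_lt_iff] at hg
      obtain ⟨⟨_, hgε⟩, hgv⟩ := hg
      exact ⟨g, fun _ => ⟨hgε, hgv⟩⟩
    · exact ⟨fun _ => f 0, fun h => absurd h hj⟩
  choose G hG using hex
  -- Pointwise ultrafilter limits exist, since `M` is proper.
  have hball : ∀ t, ∃ x : M, t ∈ T → Tendsto (fun j => G j t) (U : Filter ℕ) (𝓝 x) := by
    intro t
    by_cases ht : t ∈ T
    · have h1 : ∀ᶠ j in (U : Filter ℕ), dist (f t) (fj j t) ≤ 1 := by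
        refine hUtop ?_
        have := (hconv t ht)
        have h0 : Tendsto (fun j => dist (f t) (fj j t)) atTop (𝓝 (dist (f t) (f t))) :=
          tendsto_const_nhds.dist this
        rw [dist_self] at h0
        exact h0.eventually_le_const (by norm_num)
      have h2 : ∀ᶠ j in (U : Filter ℕ), G j t ∈ Metric.closedBall (f t) (1 + ε) := by
        filter_upwards [h1, hUS] with j hj1 hjS
        have := (hG j hjS).1 t ht
        simp only [Metric.mem_closedBall]
        calc dist (G j t) (f t) ≤ dist (G j t) (fj j t) + dist (fj j t) (f t) :=
              dist_triangle _ _ _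
          _ ≤ ε + 1 := add_le_add (by rw [dist_comm]; exact this) (by rwa [dist_comm])
          _ = 1 + ε := by ring
      obtain ⟨x, _, hx⟩ :=
        (isCompact_closedBall (f t) (1 + ε)).ultrafilter_le_nhds (U.map (fun j => G j t))
          (le_principal_iff.mpr h2)
      exact ⟨x, fun _ => hx⟩
    · exact ⟨f t, fun h => absurd h ht⟩
  choose g hg using hball
  have hgt : ∀ t ∈ T, Tendsto (fun j => G j t) (U : Filter ℕ) (𝓝 (g t)) := fun t ht => hg t ht
  -- `g` is uniformly ε-close to `f` on `T`.
  have hclose : ∀ t ∈ T, dist (f t) (g t) ≤ ε := by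
    intro t ht
    have h1 : Tendsto (fun j => dist (f t) (G j t)) (U : Filter ℕ) (𝓝 (dist (f t) (g t))) :=
      tendsto_const_nhds.dist (hgt t ht)
    have h2 : Tendsto (fun j => dist (f t) (fj j t) + ε) (U : Filter ℕ) (𝓝 (0 + ε)) := by
      have h0 : Tendsto (fun j => dist (f t) (fj j t)) atTop (𝓝 (dist (f t) (f t))) :=
        tendsto_const_nhds.dist (hconv t ht)
      rw [dist_self] at h0
      exact (h0.mono_left hUtop).add tendsto_const_nhds
    have h3 : ∀ᶠ j in (U : Filter ℕ), dist (f t) (G j t) ≤ dist (f t) (fj j t) + ε := by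
      filter_upwards [hUS] with j hjS
      calc dist (f t) (G j t) ≤ dist (f t) (fj j t) + dist (fj j t) (G j t) :=
            dist_triangle _ _ _
        _ ≤ dist (f t) (fj j t) + ε := add_le_add_right ((hG j hjS).1 t ht) _
    have := le_of_tendsto_of_tendsto h1 h2 h3
    simpa using this
  -- `g` has variation at most `L + δ`.
  have hvar : eVariationOn g T ≤ L + δ := by
    rw [eVariationOn]
    refine iSup_le ?_
    rintro ⟨n, u, hu, hus⟩
    have htend : Tendsto
        (fun j => ∑ i ∈ Finset.range n, edist (G j (u (i + 1))) (G j (u i)))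
        (U : Filter ℕ) (𝓝 (∑ i ∈ Finset.range n, edist (g (u (i + 1))) (g (u i)))) :=
      tendsto_finset_sum _ fun i _ => (hgt _ (hus (i + 1))).edist (hgt _ (hus i))
    refine le_of_tendsto htend ?_
    filter_upwards [hUS] with j hjS
    calc ∑ i ∈ Finset.range n, edist (G j (u (i + 1))) (G j (u i))
        ≤ eVariationOn (G j) T := eVariationOn.sum_le hu hus
      _ ≤ L + δ := (hG j hjS).2.le
  -- Conclude.
  calc approxVar f T ε ≤ eVariationOn g T := by
        refine iInf_le_of_le g (iInf_le_of_le ⟨?_, hclose⟩ le_rfl)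
        exact (hvar.trans_lt (by
          exact ENNReal.add_lt_top.mpr ⟨hLtop, ENNReal.coe_lt_top⟩)).ne
    _ ≤ L + δ := hvar
end

section
/- Let I = [a,b] ⊂ ℝ, x,y ∈ ℝ with x ≠ y, and f = D_{x,y} the Dirichlet-type function: f(t) = x if t ∈ I∩ℚ, f(t) = y otherwise. Then V_ε(f,I) = ∞ for 0 < ε < |x−y|/2, and V_ε(f,I) = 0 for ε ≥ |x−y|/2. -/
open Filter Set
open scoped ENNReal Topology

/-! If `g` is `ε`-close to `f`, the triangle inequality turns every jump of size `c` of `f` along a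
monotone sequence into a jump of size at least `c - 2ε` of `g`, so infinitely many of them force
`g` to have infinite variation. Rationals and irrationals are both dense, so `[a, b]` contains a
monotone sequence alternating between them, along which the Dirichlet function jumps by `|x - y|`.
Conversely, the constant midpoint of `x` and `y` is `|x - y| / 2`-close to `f` and has variation
zero. -/

theorem eVariationOn.eq_top_of_le_edist {α E : Type*} [LinearOrder α] [PseudoEMetricSpace E]
    {g : α → E} {s : Set α} {u : ℕ → α} (hu : Monotone u) (us : ∀ i, u i ∈ s) {δ : ℝ≥0∞}
    (hδ : δ ≠ 0) (h : ∀ i, δ ≤ edist (g (u (i + 1))) (g (u i))) : eVariationOn g s = ⊤ := by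
  refine top_le_iff.mp ?_
  calc ⊤ = (⨆ n : ℕ, (n : ℝ≥0∞)) * δ := by rw [ENNReal.iSup_natCast, ENNReal.top_mul hδ]
    _ = ⨆ n : ℕ, ∑ _i ∈ Finset.range n, δ := by simp [ENNReal.iSup_mul]
    _ ≤ eVariationOn g s := iSup_le fun n =>
      (Finset.sum_le_sum fun i _ => h i).trans (eVariationOn.sum_le hu us)

section approxVar

variable {M : Type*} [MetricSpace M] {f : ℝ → M} {T : Set ℝ} {ε : ℝ}

theorem approxVar_eq_top_of_le_dist {u : ℕ → ℝ} (hu : Monotone u) (huT : ∀ i, u i ∈ T) {c : ℝ}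
    (hc : ∀ i, c ≤ dist (f (u (i + 1))) (f (u i))) (hε : 2 * ε < c) : approxVar f T ε = ⊤ := by
  simp only [approxVar, iInf_eq_top]
  rintro g ⟨hg, hfg⟩
  refine eVariationOn.eq_top_of_le_edist hu huT (δ := .ofReal (c - 2 * ε)) (by simpa) fun i => ?_
  rw [edist_dist]
  refine ENNReal.ofReal_le_ofReal ?_
  have := dist_triangle4 (f (u (i + 1))) (g (u (i + 1))) (g (u i)) (f (u i))
  linarith [hc i, hfg _ (huT (i + 1)), dist_comm (f (u i)) (g (u i)) ▸ hfg _ (huT i)]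

theorem approxVar_eq_zero_of_forall_dist_le (m : M) (hm : ∀ t ∈ T, dist (f t) m ≤ ε) :
    approxVar f T ε = 0 := by
  have hconst : eVariationOn (fun _ : ℝ => m) T = 0 :=
    eVariationOn.constant_on (subsingleton_singleton.anti (image_subset_iff.mpr fun _ _ => rfl))
  exact le_antisymm (iInf₂_le_of_le _ ⟨by simp [hconst], hm⟩ hconst.le) zero_le

end approxVar

theorem exists_strictMono_mem_iff_even {α : Type*} [LinearOrder α] [TopologicalSpace α]
    [DenselyOrdered α] [OrderTopology α] [FirstCountableTopology α] {s : Set α} (hs : Dense s)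
    (hs' : Dense sᶜ) {a b : α} (hab : a < b) :
    ∃ u : ℕ → α, StrictMono u ∧ (∀ i, u i ∈ Ioo a b) ∧ ∀ i, u i ∈ s ↔ Even i := by
  obtain ⟨c, hc, hcab, -⟩ := exists_seq_strictMono_tendsto' hab
  have hpick : ∀ i, ∃ t ∈ Ioo (c i) (c (i + 1)), t ∈ s ↔ Even i := fun i => by
    by_cases hi : Even i
    · obtain ⟨t, hts, ht⟩ := hs.exists_between (hc i.lt_succ_self)
      exact ⟨t, ht, iff_of_true hts hi⟩
    · obtain ⟨t, hts, ht⟩ := hs'.exists_between (hc i.lt_succ_self)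
      exact ⟨t, ht, iff_of_false hts hi⟩
  choose u hu hus using hpick
  refine ⟨u, strictMono_nat_of_lt_succ fun i => (hu i).2.trans (hu (i + 1)).1, fun i => ?_, hus⟩
  exact ⟨(hcab i).1.trans (hu i).1, (hu i).2.trans (hcab (i + 1)).2⟩

theorem approxVar_dirichlet_general {a b x y : ℝ} (hab : a < b) (f : ℝ → ℝ)
    (hfq : ∀ t ∈ Set.Icc a b, (∃ q : ℚ, (q : ℝ) = t) → f t = x)
    (hfi : ∀ t ∈ Set.Icc a b, (¬∃ q : ℚ, (q : ℝ) = t) → f t = y) (ε : ℝ) :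
    (0 < ε → ε < |x - y| / 2 → approxVar f (Set.Icc a b) ε = ⊤) ∧
    (|x - y| / 2 ≤ ε → approxVar f (Set.Icc a b) ε = 0) := by
  classical
  have hf : ∀ t ∈ Icc a b, f t = if t ∈ range ((↑) : ℚ → ℝ) then x else y := fun t ht => by
    split_ifs with hq
    exacts [hfq t ht hq, hfi t ht hq]
  refine ⟨fun _ hε => ?_, fun hε => ?_⟩
  · obtain ⟨u, hu, huab, hus⟩ :=
      exists_strictMono_mem_iff_even Rat.denseRange_cast dense_irrational hab
    have huT i : u i ∈ Icc a b := Ioo_subset_Icc_self (huab i)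
    refine approxVar_eq_top_of_le_dist hu.monotone huT (c := |x - y|) (fun i => ?_) (by linarith)
    rw [hf _ (huT i), hf _ (huT (i + 1)), hus, hus, Nat.even_add_one, Real.dist_eq]
    split_ifs <;> simp [abs_sub_comm]
  · refine approxVar_eq_zero_of_forall_dist_le (midpoint ℝ x y) fun t ht => ?_
    rw [hf t ht]
    split_ifs
    · simpa [dist_left_midpoint, Real.dist_eq, div_eq_inv_mul] using hε
    · simpa [dist_right_midpoint, Real.dist_eq, div_eq_inv_mul, abs_sub_comm] using hε

theorem approxVar_dirichlet {a b x y : ℝ} (hab : a < b) (hxy : x ≠ y) (f : ℝ → ℝ)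
    (hfq : ∀ t ∈ Set.Icc a b, (∃ q : ℚ, (q : ℝ) = t) → f t = x)
    (hfi : ∀ t ∈ Set.Icc a b, (¬∃ q : ℚ, (q : ℝ) = t) → f t = y) (ε : ℝ) :
    (0 < ε → ε < |x - y| / 2 → approxVar f (Set.Icc a b) ε = ⊤) ∧
    (|x - y| / 2 ≤ ε → approxVar f (Set.Icc a b) ε = 0) :=
  approxVar_dirichlet_general hab f hfq hfi ε
end
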